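/- (Theorem 3, Jump Start Greedy approximation guarantee, stated for any execution trace satisfying the greedy invariant.) Let P be a finite nonempty set of paths, x an impact vector, ε ∈ (0,1), β ≥ 0, n = |V|, and let s* be an impact vector with d_{x+s*}(p) ≥ T for all p ∈ P and ‖s*‖ + β·n > 0. Let s_0 = 0 and, for t = 1,…,L, let s_t = s_{t−1} + ⟨v_t, x̂_t⟩ with x̂_t > 0, where, writing P_{t−1} = {p ∈ P : d_{x+s_{t−1}}(p) < T(1−ε)}, the following holds for every t: for every vertex u and every a ≥ β with a > 0, r_{P_{t−1},x+s_{t−1},v_t}(x̂_t)/x̂_t ≥ r_{P_{t−1},x+s_{t−1},u}(a)/a. If P_{L−1} ≠ ∅, then ‖s_L‖ = ∑_{t=1}^{L} x̂_t ≤ (‖s*‖ + β·n) · (ln(|P|·ε^{−1}) + 1). -/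

import Mathlib

/-- The capped length of a path `p` under impact vector `x`:
`d_x(p) = min(∑_{v ∈ p} f_v(x_v), T)`. -/
noncomputable def dLen {V : Type*} (f : V → ℝ → ℝ) (T : ℝ) (x : V → ℝ) (p : List V) : ℝ :=
  min ((p.map (fun v => f v (x v))).sum) T

/-- `r_{P,w,v}(a) = ∑_{p∈P} (d_{w+⟨v,a⟩}(p) − d_w(p))`. -/
noncomputable def rGain {V : Type*} [DecidableEq V] (f : V → ℝ → ℝ) (T : ℝ)
    (P : Finset (List V)) (w : V → ℝ) (v : V) (a : ℝ) : ℝ :=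
  ∑ p ∈ P, (dLen f T (w + Pi.single v a) p - dLen f T w p)

/-!
Take as potential the total deficit `Φ t = ∑_{p ∈ P_t} (T - d_{x+s_t}(p))` of the paths still
unfinished. Capping at `T` is concave, so raising every vertex `u` by `s*_u + β` separately gains
at least as much as raising them all at once, which finishes every path of `P_{t-1}`; hence
`Φ_{t-1} ≤ ∑_u r_u(s*_u + β)`. The greedy choice bounds each `r_u(a)/a` by the gain rate of the
chosen step, which is at most `(Φ_{t-1} - Φ_t) / x̂_t`. With `K = ‖s*‖ + β n` this gives
`x̂_t ≤ K (1 - Φ_t / Φ_{t-1})`; for `t < L` we use `1 - r ≤ -log r` and telescope, for `t = L` the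
trivial bound `K`. Finally `Φ_0 ≤ |P| T` and `Φ_{L-1} ≥ T ε`.
-/

open Finset

lemma min_add_sub_min_le_of_le {T A B δ : ℝ} (hAB : A ≤ B) (hδ : 0 ≤ δ) :
    min (B + δ) T - min B T ≤ min (A + δ) T - min A T := by
  simp only [min_def]; split_ifs <;> linarith

lemma min_add_sum_sub_min_le {ι : Type*} (T A : ℝ) (s : Finset ι) {δ : ι → ℝ}
    (hδ : ∀ i ∈ s, 0 ≤ δ i) :
    min (A + ∑ i ∈ s, δ i) T - min A T ≤ ∑ i ∈ s, (min (A + δ i) T - min A T) := by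
  induction s using Finset.cons_induction with
  | empty => simp
  | cons j s hj ih =>
    have hs : 0 ≤ ∑ i ∈ s, δ i := sum_nonneg fun i hi => hδ i (mem_cons_of_mem hi)
    have hj := min_add_sub_min_le_of_le (T := T) (A := A) (le_add_of_nonneg_right hs)
      (hδ j (mem_cons_self j s))
    rw [sum_cons, sum_cons, ← add_assoc, add_right_comm]
    linarith [ih fun i hi => hδ i (mem_cons_of_mem hi)]

lemma List.sum_map_eq_sum_count {V M : Type*} [Fintype V] [DecidableEq V] [AddCommMonoid M]
    (l : List V) (g : V → M) :
    (l.map g).sum = ∑ u, l.count u • g u := by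
  rw [Finset.sum_list_map_count]
  exact sum_subset (subset_univ _) fun u _ hu => by
    simp [List.count_eq_zero.2 (by simpa using hu)]

lemma monotoneOn_Iic_of_le_succ {α : Type*} [Preorder α] {s : ℕ → α} {L : ℕ}
    (h : ∀ t < L, s t ≤ s (t + 1)) : MonotoneOn s (Set.Iic L) := by
  intro t _ t' ht' htt'
  induction t', htt' using Nat.le_induction with
  | base => exact le_rfl
  | succ t' _ ih => exact (ih (Nat.le_of_succ_le ht')).trans (h t' ht')

section dLen

variable {V : Type*} (f : V → ℝ → ℝ) (T : ℝ)

lemma dLen_le (w : V → ℝ) (p : List V) : dLen f T w p ≤ T :=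
  min_le_right _ _

lemma dLen_nonneg (hT : 0 ≤ T) (hf0 : ∀ v y, 0 ≤ y → 0 ≤ f v y) {w : V → ℝ} (hw : 0 ≤ w)
    (p : List V) : 0 ≤ dLen f T w p :=
  le_min (List.sum_nonneg fun _ h => by
    obtain ⟨v, -, rfl⟩ := List.mem_map.1 h
    exact hf0 v _ (hw v)) hT

lemma dLen_mono (hf : ∀ v, MonotoneOn (f v) (Set.Ici 0)) {w w' : V → ℝ} (hw : 0 ≤ w)
    (hww' : w ≤ w') (p : List V) : dLen f T w p ≤ dLen f T w' p :=
  min_le_min_right _ <| List.sum_le_sum fun v _ =>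
    hf v (hw v) ((hw v).trans (hww' v)) (hww' v)

lemma filter_dLen_lt_subset (hf : ∀ v, MonotoneOn (f v) (Set.Ici 0)) {w w' : V → ℝ}
    (hw : 0 ≤ w) (hww' : w ≤ w') (P : Finset (List V)) (c : ℝ) :
    P.filter (fun p => dLen f T w' p < c) ⊆ P.filter (fun p => dLen f T w p < c) :=
  fun p hp => by
    rw [mem_filter] at hp ⊢
    exact ⟨hp.1, (dLen_mono f T hf hw hww' p).trans_lt hp.2⟩

variable [Fintype V] [DecidableEq V]

lemma dLen_add (w y : V → ℝ) (p : List V) :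
    dLen f T (w + y) p = min ((p.map fun v => f v (w v)).sum
      + ∑ u, p.count u • (f u (w u + y u) - f u (w u))) T := by
  simp only [dLen, List.sum_map_eq_sum_count, ← sum_add_distrib, Pi.add_apply, smul_sub,
    add_sub_cancel]

lemma dLen_add_single (w : V → ℝ) (u : V) (a : ℝ) (p : List V) :
    dLen f T (w + Pi.single u a) p = min ((p.map fun v => f v (w v)).sum
      + p.count u • (f u (w u + a) - f u (w u))) T := by
  rw [dLen_add, sum_eq_single u (fun v _ hv => by simp [hv]) (by simp)]
  simp

lemma dLen_add_sub_le_sum_single (hf : ∀ v, MonotoneOn (f v) (Set.Ici 0)) {w y : V → ℝ}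
    (hw : 0 ≤ w) (hy : 0 ≤ y) (p : List V) :
    dLen f T (w + y) p - dLen f T w p
      ≤ ∑ u, (dLen f T (w + Pi.single u (y u)) p - dLen f T w p) := by
  have hδ : ∀ u ∈ univ, 0 ≤ p.count u • (f u (w u + y u) - f u (w u)) := fun u _ =>
    smul_nonneg (Nat.zero_le _) <| sub_nonneg.2 <|
      hf u (hw u) (add_nonneg (hw u) (hy u)) (le_add_of_nonneg_right (hy u))
  rw [dLen_add]
  simp only [dLen_add_single]
  exact min_add_sum_sub_min_le T _ univ hδ

end dLen

section deficit

variable {V : Type*} (f : V → ℝ → ℝ) (T : ℝ)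

noncomputable def deficit (Q : Finset (List V)) (w : V → ℝ) : ℝ :=
  ∑ p ∈ Q, (T - dLen f T w p)

lemma deficit_nonneg (Q : Finset (List V)) (w : V → ℝ) : 0 ≤ deficit f T Q w :=
  sum_nonneg fun p _ => sub_nonneg.2 (dLen_le f T w p)

lemma sub_dLen_le_deficit {Q : Finset (List V)} {p : List V} (hp : p ∈ Q) (w : V → ℝ) :
    T - dLen f T w p ≤ deficit f T Q w :=
  single_le_sum (f := fun p => T - dLen f T w p) (fun q _ => sub_nonneg.2 (dLen_le f T w q)) hp

lemma deficit_le_card_mul (hT : 0 ≤ T) (hf0 : ∀ v y, 0 ≤ y → 0 ≤ f v y) (Q : Finset (List V))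
    {w : V → ℝ} (hw : 0 ≤ w) : deficit f T Q w ≤ Q.card * T := by
  rw [← nsmul_eq_mul, ← sum_const]
  exact sum_le_sum fun p _ => sub_le_self T (dLen_nonneg f T hT hf0 hw p)

lemma deficit_mono_left {Q Q' : Finset (List V)} (h : Q' ⊆ Q) (w : V → ℝ) :
    deficit f T Q' w ≤ deficit f T Q w :=
  sum_le_sum_of_subset_of_nonneg h fun p _ _ => sub_nonneg.2 (dLen_le f T w p)

lemma mul_le_deficit_filter {ε : ℝ} {P : Finset (List V)} {w : V → ℝ} {p : List V}
    (hp : p ∈ P.filter (fun p => dLen f T w p < T * (1 - ε))) :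
    T * ε ≤ deficit f T (P.filter (fun p => dLen f T w p < T * (1 - ε))) w := by
  refine le_trans ?_ (sub_dLen_le_deficit f T hp w)
  linarith [(mem_filter.1 hp).2]

variable [DecidableEq V]

lemma deficit_sub_deficit_add_single (Q : Finset (List V)) (w : V → ℝ) (v : V) (a : ℝ) :
    deficit f T Q w - deficit f T Q (w + Pi.single v a) = rGain f T Q w v a := by
  rw [deficit, deficit, rGain, ← sum_sub_distrib]
  exact sum_congr rfl fun p _ => by ring

lemma rGain_zero (Q : Finset (List V)) (w : V → ℝ) (v : V) : rGain f T Q w v 0 = 0 := by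
  simp [rGain]

variable [Fintype V]

lemma deficit_le_sum_rGain (hf : ∀ v, MonotoneOn (f v) (Set.Ici 0)) {Q : Finset (List V)}
    {w y : V → ℝ} (hw : 0 ≤ w) (hy : 0 ≤ y) (hcover : ∀ p ∈ Q, T ≤ dLen f T (w + y) p) :
    deficit f T Q w ≤ ∑ u, rGain f T Q w u (y u) := by
  simp only [deficit, rGain]
  rw [sum_comm]
  exact sum_le_sum fun p hp =>
    (sub_le_sub_right (hcover p hp) _).trans (dLen_add_sub_le_sum_single f T hf hw hy p)

lemma deficit_le_mul_of_ratio_le (hf : ∀ v, MonotoneOn (f v) (Set.Ici 0))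
    {Q : Finset (List V)} {w y : V → ℝ} {β ρ : ℝ} (hw : 0 ≤ w) (hy : 0 ≤ y) (hβ : 0 ≤ β)
    (hcover : ∀ p ∈ Q, T ≤ dLen f T (w + y) p)
    (hρ : ∀ u a, β ≤ a → 0 < a → rGain f T Q w u a / a ≤ ρ) :
    deficit f T Q w ≤ (∑ u, y u + β * Fintype.card V) * ρ := by
  have hyβ : 0 ≤ y + fun _ => β := add_nonneg hy fun _ => hβ
  have hcover' : ∀ p ∈ Q, T ≤ dLen f T (w + (y + fun _ => β)) p := fun p hp =>
    (hcover p hp).trans <| dLen_mono f T hf (add_nonneg hw hy)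
      (by rw [← add_assoc]; exact le_add_of_nonneg_right fun _ => hβ) p
  have hterm : ∀ u, rGain f T Q w u (y u + β) ≤ (y u + β) * ρ := fun u => by
    rcases (add_nonneg (hy u) hβ).eq_or_lt with h | h
    · rw [← h, rGain_zero, zero_mul]
    · exact (div_le_iff₀' h).1 (hρ u _ (le_add_of_nonneg_left (hy u)) h)
  calc deficit f T Q w ≤ ∑ u, rGain f T Q w u (y u + β) :=
        deficit_le_sum_rGain f T hf hw hyβ hcover'
    _ ≤ ∑ u, (y u + β) * ρ := sum_le_sum fun u _ => hterm u
    _ = (∑ u, y u + β * Fintype.card V) * ρ := by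
        rw [← sum_mul, sum_add_distrib, sum_const, card_univ, nsmul_eq_mul, mul_comm β]

lemma mul_deficit_le_of_greedy (hf : ∀ v, MonotoneOn (f v) (Set.Ici 0))
    {Q Q' : Finset (List V)} {w y : V → ℝ} {β : ℝ} (hw : 0 ≤ w) (hy : 0 ≤ y) (hβ : 0 ≤ β)
    (hcover : ∀ p ∈ Q, T ≤ dLen f T (w + y) p) (hQ' : Q' ⊆ Q) {v : V} {a : ℝ} (ha : 0 < a)
    (hgreedy : ∀ u b, β ≤ b → 0 < b → rGain f T Q w u b / b ≤ rGain f T Q w v a / a) :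
    a * deficit f T Q w ≤ (∑ u, y u + β * Fintype.card V)
      * (deficit f T Q w - deficit f T Q' (w + Pi.single v a)) := by
  have hK : 0 ≤ ∑ u, y u + β * Fintype.card V :=
    add_nonneg (sum_nonneg fun u _ => hy u) (by positivity)
  have hratio := deficit_le_mul_of_ratio_le f T hf hw hy hβ hcover hgreedy
  calc a * deficit f T Q w ≤ (∑ u, y u + β * Fintype.card V) * rGain f T Q w v a := by
        rw [mul_div_assoc'] at hratio
        rwa [le_div_iff₀ ha, mul_comm] at hratio
    _ ≤ _ := by
        rw [← deficit_sub_deficit_add_single]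
        exact mul_le_mul_of_nonneg_left (sub_le_sub_left (deficit_mono_left f T hQ' _) _) hK

end deficit

lemma le_mul_log_div_of_mul_le_mul_sub {a K Φ₀ Φ₁ : ℝ} (hK : 0 ≤ K) (hΦ₀ : 0 < Φ₀)
    (hΦ₁ : 0 < Φ₁) (h : a * Φ₀ ≤ K * (Φ₀ - Φ₁)) : a ≤ K * Real.log (Φ₀ / Φ₁) := by
  have hlog := Real.one_sub_inv_le_log_of_pos (div_pos hΦ₀ hΦ₁)
  rw [inv_div] at hlog
  calc a ≤ K * (Φ₀ - Φ₁) / Φ₀ := (le_div_iff₀ hΦ₀).2 h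
    _ = K * (1 - Φ₁ / Φ₀) := by field_simp
    _ ≤ K * Real.log (Φ₀ / Φ₁) := mul_le_mul_of_nonneg_left hlog hK

/-- All but the last step are bounded through `1 - r ≤ -log r`, the last one by `K`. -/
lemma sum_range_le_mul_log_div_add_one {a Φ : ℕ → ℝ} {K : ℝ} {L : ℕ} (hK : 0 ≤ K)
    (hΦ : ∀ t < L, 0 < Φ t) (hΦL : 0 ≤ Φ L) (h : ∀ t < L, a t * Φ t ≤ K * (Φ t - Φ (t + 1))) :
    ∑ t ∈ range L, a t ≤ K * (Real.log (Φ 0 / Φ (L - 1)) + 1) := by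
  cases L with
  | zero => simpa using hK
  | succ n =>
    have hlast : a n ≤ K := by
      refine le_of_mul_le_mul_right ?_ (hΦ n n.lt_succ_self)
      nlinarith [h n n.lt_succ_self]
    have hsteps : ∑ t ∈ range n, a t ≤ K * Real.log (Φ 0 / Φ n) := by
      calc ∑ t ∈ range n, a t ≤ ∑ t ∈ range n, K * (Real.log (Φ t) - Real.log (Φ (t + 1))) :=
            sum_le_sum fun t ht => by
              have ht := mem_range.1 ht
              rw [← Real.log_div (hΦ t (by omega)).ne' (hΦ (t + 1) (by omega)).ne']
              exact le_mul_log_div_of_mul_le_mul_sub hK (hΦ t (by omega)) (hΦ (t + 1) (by omega))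
                (h t (by omega))
        _ = K * Real.log (Φ 0 / Φ n) := by
            rw [← mul_sum, sum_range_sub' (fun t => Real.log (Φ t)),
              Real.log_div (hΦ 0 (by omega)).ne' (hΦ n (by omega)).ne']
    rw [sum_range_succ, Nat.add_sub_cancel]
    linarith

lemma sum_range_le_mul_log_add_one {a Φ : ℕ → ℝ} {K C : ℝ} {L : ℕ} (hK : 0 ≤ K)
    (hΦ : ∀ t ≤ L - 1, 0 < Φ t) (hΦL : 0 ≤ Φ L) (h : ∀ t < L, a t * Φ t ≤ K * (Φ t - Φ (t + 1)))
    (hC : Φ 0 ≤ C * Φ (L - 1)) :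
    ∑ t ∈ range L, a t ≤ K * (Real.log C + 1) :=
  (sum_range_le_mul_log_div_add_one hK (fun t ht => hΦ t (by omega)) hΦL h).trans <| by
    gcongr
    · exact div_pos (hΦ 0 (Nat.zero_le _)) (hΦ _ le_rfl)
    · exact (div_le_iff₀ (hΦ _ le_rfl)).2 hC

open scoped Classical in
theorem stmt10_general {V : Type*} [Fintype V] [DecidableEq V]
    (f : V → ℝ → ℝ) (T : ℝ) (hT : 0 < T)
    (hf : ∀ v, MonotoneOn (f v) (Set.Ici 0))
    (hf0 : ∀ v y, 0 ≤ y → 0 ≤ f v y)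
    (P : Finset (List V))
    (x : V → ℝ) (hx : ∀ u, 0 ≤ x u)
    (ε : ℝ) (hε0 : 0 < ε)
    (β : ℝ) (hβ : 0 ≤ β)
    (sStar : V → ℝ) (hsStar : ∀ u, 0 ≤ sStar u)
    (hopt : ∀ p ∈ P, T ≤ dLen f T (x + sStar) p)
    (L : ℕ)
    (s : ℕ → V → ℝ) (v : ℕ → V) (xhat : ℕ → ℝ)
    (hs0 : s 0 = 0)
    (hxhat : ∀ t, 1 ≤ t → t ≤ L → 0 < xhat t)
    (hstep : ∀ t, 1 ≤ t → t ≤ L → s t = s (t - 1) + Pi.single (v t) (xhat t))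
    (Pt : ℕ → Finset (List V))
    (hPt : ∀ t, Pt t = P.filter (fun p => dLen f T (x + s t) p < T * (1 - ε)))
    (hgreedy : ∀ t, 1 ≤ t → t ≤ L → ∀ u, ∀ a : ℝ, β ≤ a → 0 < a →
      rGain f T (Pt (t - 1)) (x + s (t - 1)) u a / a
        ≤ rGain f T (Pt (t - 1)) (x + s (t - 1)) (v t) (xhat t) / xhat t)
    (hfinal : (Pt (L - 1)).Nonempty) :
    ∑ t ∈ Finset.Icc 1 L, xhat t ≤
      ((∑ u : V, sStar u) + β * (Fintype.card V : ℝ)) *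
        (Real.log ((P.card : ℝ) * ε⁻¹) + 1) := by
  set K := ∑ u, sStar u + β * Fintype.card V
  set Φ : ℕ → ℝ := fun t => deficit f T (Pt t) (x + s t)
  have hK : 0 ≤ K := add_nonneg (sum_nonneg fun u _ => hsStar u) (by positivity)
  have hs_step : ∀ t < L, s (t + 1) = s t + Pi.single (v (t + 1)) (xhat (t + 1)) := fun t ht =>
    hstep (t + 1) t.succ_pos ht
  have hs_mono : MonotoneOn s (Set.Iic L) := monotoneOn_Iic_of_le_succ fun t ht => by
    rw [hs_step t ht]
    exact le_add_of_nonneg_right (Pi.single_nonneg.2 (hxhat _ t.succ_pos ht).le)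
  have hs_nonneg : ∀ t ≤ L, 0 ≤ s t := fun t ht => hs0 ▸ hs_mono L.zero_le ht t.zero_le
  have hw : ∀ t ≤ L, 0 ≤ x + s t := fun t ht => add_nonneg hx (hs_nonneg t ht)
  have hPt_anti : ∀ t t', t ≤ t' → t' ≤ L → Pt t' ⊆ Pt t := fun t t' htt' ht' => by
    rw [hPt, hPt]
    exact filter_dLen_lt_subset f T hf (hw t (htt'.trans ht'))
      (add_le_add_right (hs_mono (htt'.trans ht') ht' htt') x) P _
  have hΦ_ge : ∀ t ≤ L - 1, T * ε ≤ Φ t := fun t ht => by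
    obtain ⟨p, hp⟩ := hfinal
    have hp := hPt_anti t (L - 1) ht (Nat.sub_le L 1) hp
    simp only [Φ, hPt] at hp ⊢
    exact mul_le_deficit_filter f T hp
  have hC : Φ 0 ≤ P.card * ε⁻¹ * Φ (L - 1) :=
    calc Φ 0 ≤ (Pt 0).card * T := deficit_le_card_mul f T hT.le hf0 _ (hw 0 L.zero_le)
      _ ≤ P.card * T := by gcongr; exact hPt 0 ▸ filter_subset _ P
      _ = P.card * ε⁻¹ * (T * ε) := by field_simp
      _ ≤ P.card * ε⁻¹ * Φ (L - 1) := by gcongr; exact hΦ_ge _ le_rfl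
  have hdrop : ∀ t < L, xhat (t + 1) * Φ t ≤ K * (Φ t - Φ (t + 1)) := fun t ht => by
    have hcover : ∀ p ∈ Pt t, T ≤ dLen f T (x + s t + sStar) p := fun p hp =>
      (hopt p (mem_filter.1 (hPt t ▸ hp)).1).trans <| dLen_mono f T hf (add_nonneg hx hsStar)
        (by rw [add_right_comm]; exact le_add_of_nonneg_right (hs_nonneg t ht.le)) p
    simp only [Φ, hs_step t ht, ← add_assoc]
    exact mul_deficit_le_of_greedy f T hf (hw t ht.le) hsStar hβ hcover
      (hPt_anti t (t + 1) t.le_succ ht) (hxhat _ t.succ_pos ht)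
      (by simpa using hgreedy (t + 1) t.succ_pos ht)
  rw [← Ico_add_one_right_eq_Icc, ← zero_add 1, ← sum_Ico_add', ← range_eq_Ico]
  exact sum_range_le_mul_log_add_one hK (fun t ht => (mul_pos hT hε0).trans_le (hΦ_ge t ht))
    (deficit_nonneg f T _ _) hdrop hC

open scoped Classical in
/-- Theorem 3: Jump Start Greedy approximation guarantee, stated for
any execution trace satisfying the greedy invariant. -/
theorem stmt10 {V : Type*} [Fintype V] [DecidableEq V]
    (f : V → ℝ → ℝ) (T : ℝ) (hT : 0 < T)
    (hf : ∀ v, MonotoneOn (f v) (Set.Ici 0))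
    (hf0 : ∀ v y, 0 ≤ y → 0 ≤ f v y)
    (P : Finset (List V)) (hPne : P.Nonempty) (hP : ∀ p ∈ P, p.Nodup)
    (x : V → ℝ) (hx : ∀ u, 0 ≤ x u)
    (ε : ℝ) (hε0 : 0 < ε) (hε1 : ε < 1)
    (β : ℝ) (hβ : 0 ≤ β)
    (sStar : V → ℝ) (hsStar : ∀ u, 0 ≤ sStar u)
    (hopt : ∀ p ∈ P, T ≤ dLen f T (x + sStar) p)
    (hpos : 0 < (∑ u : V, sStar u) + β * (Fintype.card V : ℝ))
    (L : ℕ) (hL : 1 ≤ L)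
    (s : ℕ → V → ℝ) (v : ℕ → V) (xhat : ℕ → ℝ)
    (hs0 : s 0 = 0)
    (hxhat : ∀ t, 1 ≤ t → t ≤ L → 0 < xhat t)
    (hstep : ∀ t, 1 ≤ t → t ≤ L → s t = s (t - 1) + Pi.single (v t) (xhat t))
    (Pt : ℕ → Finset (List V))
    (hPt : ∀ t, Pt t = P.filter (fun p => dLen f T (x + s t) p < T * (1 - ε)))
    (hgreedy : ∀ t, 1 ≤ t → t ≤ L → ∀ u, ∀ a : ℝ, β ≤ a → 0 < a →
      rGain f T (Pt (t - 1)) (x + s (t - 1)) u a / a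
        ≤ rGain f T (Pt (t - 1)) (x + s (t - 1)) (v t) (xhat t) / xhat t)
    (hfinal : (Pt (L - 1)).Nonempty) :
    ∑ t ∈ Finset.Icc 1 L, xhat t ≤
      ((∑ u : V, sStar u) + β * (Fintype.card V : ℝ)) *
        (Real.log ((P.card : ℝ) * ε⁻¹) + 1) :=
  stmt10_general f T hT hf hf0 P x hx ε hε0 β hβ sStar hsStar hopt L s v xhat hs0 hxhat hstep Pt hPt
    hgreedy hfinal
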